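/- arXiv:2507.16629 — 2 statements merged into one kernel-verified Lean document; each statement's English description precedes it below -/
import Mathlib

section
/- Let q ∈ [−1,1], define β_n² = ∑_{j=0}^{n} q^j for n ≥ 0 with β_n ≥ 0, and let C = ∑_{n=0}^{L-1} β_n |e_n⟩⟨e_{n+1}| on ℂ^{L+1}. Then with N_C = C† C, the identity [N_C, C] = −C + (1−q) N_C C holds. -/
/-!
Write `[n]_q = ∑_{j<n} q^j`. Since `β_n² = [n+1]_q`, the number operator `N_C = C† C` is the
diagonal matrix `diag([0]_q, …, [L]_q)`, and commuting a diagonal matrix `D` past the weighted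
shift `C` multiplies the weight `β_n` by `D_n - D_{n+1}`. For `D = N_C` this factor is
`[n]_q - [n+1]_q = -q^n = -1 + (1 - q)[n]_q`, which is the identity.
For `q ≥ -1` every `[n+1]_q` is nonnegative, so `β_n² = [n+1]_q` holds for the real square root.
-/

open Matrix

open Finset in
theorem geom_sum_nonneg_of_neg_one_le {R : Type*} [Ring R] [LinearOrder R] [IsStrictOrderedRing R]
    {x : R} (hx : -1 ≤ x) (n : ℕ) : 0 ≤ ∑ i ∈ range n, x ^ i := by
  rcases n.eq_zero_or_pos with rfl | hn
  · simp
  exact not_lt.1 fun h => ((geom_sum_neg_iff hn.ne').1 h).2.not_ge (neg_le_iff_add_nonneg.1 hx)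

namespace Matrix

variable {R : Type*} {L : ℕ}

section Semiring

variable [Semiring R]

def weightedShift (L : ℕ) : (ℕ → R) →ₗ[R] Matrix (Fin (L + 1)) (Fin (L + 1)) R where
  toFun w := ∑ n : Fin L, w n • single n.castSucc n.succ 1
  map_add' v w := by simp only [Pi.add_apply, add_smul, Finset.sum_add_distrib]
  map_smul' c w := by
    simp only [Pi.smul_apply, smul_eq_mul, mul_smul, Finset.smul_sum, RingHom.id_apply]

variable (w d : ℕ → R)

@[simp]
theorem weightedShift_apply_zero (i : Fin (L + 1)) : weightedShift L w i 0 = 0 := by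
  simp [weightedShift, Matrix.sum_apply]

theorem weightedShift_apply_succ (i : Fin (L + 1)) (j : Fin L) :
    weightedShift L w i j.succ = if j.castSucc = i then w j else 0 := by
  simp [weightedShift, Matrix.sum_apply, single_apply, and_comm, ite_and]

theorem diagonal_mul_weightedShift :
    diagonal (fun k : Fin (L + 1) => d k) * weightedShift L w =
      weightedShift L fun n => d n * w n := by
  ext i j
  cases j using Fin.cases with
  | zero => simp
  | succ j => rcases eq_or_ne j.castSucc i with rfl | h <;> simp [weightedShift_apply_succ, *]

theorem weightedShift_mul_diagonal :
    weightedShift L w * diagonal (fun k : Fin (L + 1) => d k) =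
      weightedShift L fun n => w n * d (n + 1) := by
  ext i j
  cases j using Fin.cases with
  | zero => simp
  | succ j => rcases eq_or_ne j.castSucc i with rfl | h <;> simp [weightedShift_apply_succ, *]

end Semiring

theorem conjTranspose_weightedShift_mul_self [Semiring R] [StarRing R] (w d : ℕ → R)
    (hd0 : d 0 = 0) (hd : ∀ n, d (n + 1) = star (w n) * w n) :
    (weightedShift L w)ᴴ * weightedShift L w = diagonal fun k : Fin (L + 1) => d k := by
  ext i k
  rw [mul_apply]
  cases i using Fin.cases with
  | zero => simp [diagonal_apply, hd0]
  | succ i =>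
    cases k using Fin.cases with
    | zero => simp
    | succ k =>
      rcases eq_or_ne i k with rfl | h
      · simp [weightedShift_apply_succ, hd]
      · simp [weightedShift_apply_succ, h]

end Matrix

theorem TQ_number_commutator_general (L : ℕ) (q : ℝ) (hq1 : -1 ≤ q)
    (β : ℕ → ℝ) (hβ : ∀ n, β n = Real.sqrt (∑ j ∈ Finset.range (n+1), q ^ j))
    (C : Matrix (Fin (L+1)) (Fin (L+1)) ℂ)
    (hC : C = ∑ n : Fin L, ((β n : ℝ) : ℂ) •
      Matrix.single n.castSucc n.succ 1)
    (N : Matrix (Fin (L+1)) (Fin (L+1)) ℂ) (hN : N = Cᴴ * C) :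
    N * C - C * N = -C + ((1 - q : ℝ) : ℂ) • (N * C) := by
  set qNum : ℕ → ℂ := fun n => ((∑ j ∈ Finset.range n, q ^ j : ℝ) : ℂ)
  have hC' : C = weightedShift L fun n => (β n : ℂ) := hC
  have hN' : N = diagonal fun k : Fin (L + 1) => qNum k := by
    rw [hN, hC']
    refine conjTranspose_weightedShift_mul_self _ _ (by simp [qNum]) fun n => ?_
    rw [hβ, Complex.star_def, Complex.conj_ofReal, ← Complex.ofReal_mul,
      Real.mul_self_sqrt (geom_sum_nonneg_of_neg_one_le hq1 _)]
  rw [hN', hC', diagonal_mul_weightedShift, weightedShift_mul_diagonal, ← map_sub, ← map_neg,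
    ← map_smul, ← map_add]
  congr 1
  funext n
  simp only [Pi.sub_apply, Pi.add_apply, Pi.neg_apply, Pi.smul_apply, smul_eq_mul, qNum,
    geom_sum_succ]
  push_cast
  ring

theorem TQ_number_commutator (L : ℕ) (q : ℝ) (hq1 : -1 ≤ q) (hq2 : q ≤ 1)
    (β : ℕ → ℝ) (hβ : ∀ n, β n = Real.sqrt (∑ j ∈ Finset.range (n+1), q ^ j))
    (C : Matrix (Fin (L+1)) (Fin (L+1)) ℂ)
    (hC : C = ∑ n : Fin L, ((β n : ℝ) : ℂ) •
      Matrix.single n.castSucc n.succ 1)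
    (N : Matrix (Fin (L+1)) (Fin (L+1)) ℂ) (hN : N = Cᴴ * C) :
    N * C - C * N = -C + ((1 - q : ℝ) : ℂ) • (N * C) :=
  TQ_number_commutator_general L q hq1 β hβ C hC N hN
end

section
/- Let C, K be operators on ℂ^{L+1} satisfying C C† − q C† C = 1 − (L+1)K and K C = ((q−1)/(L+1)) N_C C, where N_C = C†C. Then [N_C, C] = −C. -/
open Matrix

theorem abstract_bosonlike_commutator (L : ℕ) (q : ℝ)
    (C K : Matrix (Fin (L+1)) (Fin (L+1)) ℂ)
    (h1 : C * Cᴴ - (q : ℂ) • (Cᴴ * C) = 1 - ((L+1 : ℕ) : ℂ) • K)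
    (h2 : K * C = (((q - 1) / (L+1) : ℝ) : ℂ) • ((Cᴴ * C) * C)) :
    (Cᴴ * C) * C - C * (Cᴴ * C) = -C := by
  have hL : ((L+1 : ℕ) : ℂ) ≠ 0 := Nat.cast_ne_zero.mpr (Nat.succ_ne_zero L)
  have h1' : C * Cᴴ = (q : ℂ) • (Cᴴ * C) + 1 - ((L+1 : ℕ) : ℂ) • K := by
    rw [sub_eq_iff_eq_add] at h1; rw [h1]; abel
  have h3 : (C * Cᴴ) * C = ((q : ℂ) • (Cᴴ * C) + 1 - ((L+1 : ℕ) : ℂ) • K) * C := by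
    rw [h1']
  have hcoef : ((L+1 : ℕ) : ℂ) * (((q - 1) / (L+1) : ℝ) : ℂ) = (q : ℂ) - 1 := by
    have hL' : (L : ℂ) + 1 ≠ 0 := by exact_mod_cast hL
    push_cast
    field_simp
  rw [sub_mul, add_mul, smul_mul_assoc, smul_mul_assoc, one_mul, h2, smul_smul, hcoef,
    mul_assoc] at h3
  rw [h3]
  module
end
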